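/- Let d ≥ 2 be an even integer and κ ≥ 1 an integer coprime to d (hence κ is odd), write d' = d/2, let i, j ≥ 0 be integers, and write κ(j−i) = ad + b − d/2 with integers a and b satisfying 0 ≤ b < d. Then: if i − j > 0, then π_{κ/d}(q^{i+d'} − q^j) − π_{κ/d}(q^i + q^j) = κ; if 0 < j − i < d', then this difference equals κ − 2a + 1 when b = 0 and κ − 2a when b ≠ 0; and if j − i > d', then this difference equals 0. -/

import Mathlib

/-!
Up to sign, both polynomials factor as `q^s (q^n ∓ 1)` with simple roots, and the `n`-th roots of `e^{2πiγ}`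
(`0 < γ ≤ 1`) have exactly `⌊tn − γ + 1⌋` arguments in `(0, 2πt]`. Hence `π_{κ/d}` is explicit:
`(2s + n)κ/d + ⌊κn/d⌋ + 1/2` for `q^s (q^n − 1)` and `(2s + n)κ/d + ⌊κn/d + 1/2⌋` for
`q^s (q^n + 1)`. In each of the three cases the two factorisations satisfy
`2s₁ + n₁ = 2s₂ + n₂ + d'`, so the difference is `(κ + 1)/2` plus a difference of two floors, and
these floors are computed by writing `κ = 2e + 1` and `κ(j − i)/d = a + b/d − 1/2`.
-/
open Polynomial

/-- `argCount t f` is the cardinality of the multiset `Arg_t(f)` of real numbers `λ` with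
`0 < λ ≤ 2πt` such that `e^{iλ}` is a (complex) root of the real polynomial `f`, each such `λ`
counted with the multiplicity of `e^{iλ}` as a root of `f`. -/
noncomputable def argCount (t : ℝ) (f : Polynomial ℝ) : ℕ :=
  ((f.map (algebraMap ℝ ℂ)).roots.map fun ξ =>
    Nat.card {l : ℝ // 0 < l ∧ l ≤ 2 * Real.pi * t ∧ Complex.exp ((l : ℂ) * Complex.I) = ξ}).sum

/-- `piFn κ d f` is the rational number
`π_{κ/d}(f) = (a(f) + A(f))·(κ/d) + |Arg_{κ/d}(f)| + (1/2)·(multiplicity of 1 as a root of f)`,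
where `a(f)` is the multiplicity of `0` as a root of `f` and `A(f)` is the degree of `f`. -/
noncomputable def piFn (κ d : ℕ) (f : Polynomial ℝ) : ℚ :=
  ((rootMultiplicity 0 f : ℚ) + (f.natDegree : ℚ)) * (κ : ℚ) / (d : ℚ)
    + (argCount ((κ : ℝ) / (d : ℝ)) f : ℚ) + (rootMultiplicity 1 f : ℚ) / 2

open Complex

lemma Set.Finite.ncard_eq_sum_ncard_fiber {α β : Type*} [DecidableEq β] {s : Set α}
    (hs : s.Finite) {e : α → β} {R : Finset β} (hR : Set.MapsTo e s R) :
    s.ncard = ∑ b ∈ R, (s ∩ e ⁻¹' {b}).ncard := by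
  classical
  rw [Set.ncard_eq_toFinset_card s hs,
    Finset.card_eq_sum_card_fiberwise (f := e) (t := R) (by simpa using hR)]
  refine Finset.sum_congr rfl fun b _ => ?_
  rw [← Set.ncard_coe_finset]
  congr 1
  ext a
  simp

lemma argCount_eq_ncard_of_nodup (t : ℝ) (f : ℝ[X]) (hf : (f.map (algebraMap ℝ ℂ)).roots.Nodup)
    (hfin : {l : ℝ | 0 < l ∧ l ≤ 2 * Real.pi * t ∧
      exp (l * I) ∈ (f.map (algebraMap ℝ ℂ)).roots}.Finite) :
    argCount t f = {l : ℝ | 0 < l ∧ l ≤ 2 * Real.pi * t ∧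
      exp (l * I) ∈ (f.map (algebraMap ℝ ℂ)).roots}.ncard := by
  classical
  set g := f.map (algebraMap ℝ ℂ)
  have hR : g.roots = g.roots.toFinset.val := by rw [Multiset.toFinset_val, hf.dedup]
  rw [argCount, hfin.ncard_eq_sum_ncard_fiber (e := fun l : ℝ => exp (l * I))
    (R := g.roots.toFinset) fun l hl => Multiset.mem_toFinset.2 hl.2.2,
    Finset.sum_eq_multiset_sum, ← hR]
  refine congrArg Multiset.sum (Multiset.map_congr rfl fun ξ hξ => ?_)
  rw [← Nat.card_coe_set_eq]
  congr
  ext l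
  simp only [Set.mem_ofPred_eq, Set.mem_inter_iff, Set.mem_preimage, Set.mem_singleton_iff]
  constructor
  · rintro ⟨hl0, hlt, rfl⟩
    exact ⟨⟨hl0, hlt, hξ⟩, rfl⟩
  · rintro ⟨⟨hl0, hlt, -⟩, rfl⟩
    exact ⟨hl0, hlt, rfl⟩

lemma exp_mul_I_pow_eq_exp_mul_I_iff (l θ : ℝ) (n : ℕ) :
    exp (l * I) ^ n = exp (θ * I) ↔ ∃ m : ℤ, n * l = θ + 2 * Real.pi * m := by
  rw [← Complex.exp_nat_mul, Complex.exp_eq_exp_iff_exists_int]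
  refine exists_congr fun m => ?_
  constructor
  · intro h
    have := congrArg Complex.im h
    simp only [mul_im, natCast_re, ofReal_re, I_im, mul_one, ofReal_im, I_re, mul_zero, add_zero,
      natCast_im, mul_re, sub_self, add_im, intCast_re, re_ofNat, im_ofNat, sub_zero, zero_mul,
      intCast_im] at this
    linarith
  · intro h
    apply_fun ((↑) : ℝ → ℂ) at h
    push_cast at h
    linear_combination h * I

lemma setOf_exp_mul_I_pow_eq (t γ : ℝ) (n : ℕ) (hn : 0 < n) (hγ0 : 0 < γ) (hγ1 : γ ≤ 1) :
    {l : ℝ | 0 < l ∧ l ≤ 2 * Real.pi * t ∧ exp (l * I) ^ n = exp ((2 * Real.pi * γ : ℝ) * I)} =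
      (fun m : ℕ => 2 * Real.pi * (γ + m) / n) '' ↑(Finset.range ⌊t * n - γ + 1⌋₊) := by
  have hπ : 0 < 2 * Real.pi := by positivity
  have hn' : (0 : ℝ) < n := by exact_mod_cast hn
  have mem_range (m : ℕ) : m ∈ Finset.range ⌊t * n - γ + 1⌋₊ ↔ γ + m ≤ t * n := by
    rw [Finset.mem_range, ← Nat.add_one_le_iff, Nat.le_floor_iff' m.succ_ne_zero]
    push_cast
    constructor <;> intro h <;> linarith
  ext l
  simp only [Set.mem_ofPred_eq, Set.mem_image, Finset.mem_coe, mem_range,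
    exp_mul_I_pow_eq_exp_mul_I_iff]
  constructor
  · rintro ⟨hl0, hlt, m, hm⟩
    -- `γ ≤ 1` forces `m ≥ 0`
    have hm0 : 0 ≤ m := by
      have : (-1 : ℝ) < m := by nlinarith
      have : (-1 : ℤ) < m := by exact_mod_cast this
      omega
    lift m to ℕ using hm0
    refine ⟨m, ?_, ?_⟩
    · push_cast at hm
      nlinarith
    · field_simp
      push_cast at hm
      linarith
  · rintro ⟨m, hm, rfl⟩
    refine ⟨by positivity, ?_, m, ?_⟩
    · rw [div_le_iff₀ hn']
      nlinarith
    · push_cast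
      field_simp

lemma ncard_exp_mul_I_pow_eq (t γ : ℝ) (n : ℕ) (hn : 0 < n) (hγ0 : 0 < γ) (hγ1 : γ ≤ 1) :
    {l : ℝ | 0 < l ∧ l ≤ 2 * Real.pi * t ∧
      exp (l * I) ^ n = exp ((2 * Real.pi * γ : ℝ) * I)}.Finite ∧
    {l : ℝ | 0 < l ∧ l ≤ 2 * Real.pi * t ∧
      exp (l * I) ^ n = exp ((2 * Real.pi * γ : ℝ) * I)}.ncard = ⌊t * n - γ + 1⌋₊ := by
  rw [setOf_exp_mul_I_pow_eq t γ n hn hγ0 hγ1]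
  refine ⟨(Finset.finite_toSet _).image _, ?_⟩
  rw [Set.ncard_image_of_injective _ fun m₁ m₂ h => ?_, Set.ncard_coe_finset, Finset.card_range]
  have hπ : 0 < 2 * Real.pi := by positivity
  have hn' : (0 : ℝ) < n := by exact_mod_cast hn
  simp only [div_left_inj' hn'.ne', mul_right_inj' hπ.ne', add_right_inj, Nat.cast_inj] at h
  exact h

lemma argCount_of_map_eq_X_pow_sub_C (t γ : ℝ) (n : ℕ) (hn : 0 < n) (hγ0 : 0 < γ) (hγ1 : γ ≤ 1)
    (f : ℝ[X]) (hf : f.map (algebraMap ℝ ℂ) = X ^ n - C (exp ((2 * Real.pi * γ : ℝ) * I))) :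
    argCount t f = ⌊t * n - γ + 1⌋₊ := by
  have hc := exp_ne_zero ((2 * Real.pi * γ : ℝ) * I)
  have hset : {l : ℝ | 0 < l ∧ l ≤ 2 * Real.pi * t ∧
      exp (l * I) ∈ (f.map (algebraMap ℝ ℂ)).roots} =
      {l : ℝ | 0 < l ∧ l ≤ 2 * Real.pi * t ∧
      exp (l * I) ^ n = exp ((2 * Real.pi * γ : ℝ) * I)} := by
    ext l
    simp only [Set.mem_ofPred_eq, hf, mem_roots (X_pow_sub_C_ne_zero hn _), IsRoot.def, eval_sub,
      eval_pow, eval_X, eval_C, sub_eq_zero]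
  have hnodup : (f.map (algebraMap ℝ ℂ)).roots.Nodup :=
    hf ▸ nodup_roots (separable_X_pow_sub_C _ (by exact_mod_cast hn.ne') hc)
  obtain ⟨hfin, hcard⟩ := ncard_exp_mul_I_pow_eq t γ n hn hγ0 hγ1
  rw [argCount_eq_ncard_of_nodup t f hnodup (hset ▸ hfin), hset, hcard]

lemma argCount_X_pow_sub_one (t : ℝ) (n : ℕ) (hn : 0 < n) :
    argCount t (X ^ n - 1) = ⌊t * n⌋₊ := by
  rw [argCount_of_map_eq_X_pow_sub_C t 1 n hn one_pos le_rfl, sub_add_cancel]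
  simp [mul_one, ofReal_mul, exp_two_pi_mul_I]

lemma argCount_X_pow_add_one (t : ℝ) (n : ℕ) (hn : 0 < n) :
    argCount t (X ^ n + 1) = ⌊t * n + 1 / 2⌋₊ := by
  rw [argCount_of_map_eq_X_pow_sub_C t (1 / 2) n hn (by norm_num) (by norm_num)]
  · congr 1
    ring
  · rw [show ((2 * Real.pi * (1 / 2) : ℝ) : ℂ) * I = Real.pi * I by push_cast; ring,
      exp_pi_mul_I, map_neg, map_one, sub_neg_eq_add]
    simp

lemma argCount_X_pow_mul (t : ℝ) (s : ℕ) {g : ℝ[X]} (hg : g ≠ 0) :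
    argCount t (X ^ s * g) = argCount t g := by
  have hg' : g.map (algebraMap ℝ ℂ) ≠ 0 :=
    (Polynomial.map_ne_zero_iff (algebraMap ℝ ℂ).injective).2 hg
  have : IsEmpty {l : ℝ // 0 < l ∧ l ≤ 2 * Real.pi * t ∧ exp (l * I) = 0} :=
    ⟨fun u => exp_ne_zero _ u.2.2.2⟩
  rw [argCount, argCount, Polynomial.map_mul, Polynomial.map_pow, map_X,
    roots_mul (mul_ne_zero (pow_ne_zero s X_ne_zero) hg'), roots_pow, roots_X,
    Multiset.nsmul_singleton, Multiset.map_add, Multiset.sum_add, Multiset.map_replicate,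
    Multiset.sum_replicate, Nat.card_of_isEmpty, smul_zero, zero_add]

lemma rootMultiplicity_zero_X_pow_mul (s : ℕ) {g : ℝ[X]} (hg : ¬ g.IsRoot 0) :
    rootMultiplicity 0 (X ^ s * g) = s := by
  have hg0 : g ≠ 0 := by rintro rfl; exact hg (by simp)
  rw [rootMultiplicity_mul (mul_ne_zero (pow_ne_zero s X_ne_zero) hg0),
    rootMultiplicity_eq_zero hg, add_zero, ← sub_zero X, ← C_0, rootMultiplicity_X_sub_C_pow]

lemma rootMultiplicity_X_pow_mul_of_ne_zero (s : ℕ) {g : ℝ[X]} (hg : g ≠ 0) {x : ℝ}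
    (hx : x ≠ 0) : rootMultiplicity x (X ^ s * g) = rootMultiplicity x g := by
  rw [rootMultiplicity_mul (mul_ne_zero (pow_ne_zero s X_ne_zero) hg),
    rootMultiplicity_eq_zero (by simp [hx]), zero_add]

lemma rootMultiplicity_one_X_pow_sub_one (n : ℕ) (hn : 0 < n) :
    rootMultiplicity 1 (X ^ n - 1 : ℝ[X]) = 1 := by
  rw [← C_1]
  refine le_antisymm (rootMultiplicity_le_one_of_separable
    (separable_X_pow_sub_C 1 (by exact_mod_cast hn.ne') one_ne_zero) 1) ?_
  exact (rootMultiplicity_pos (X_pow_sub_C_ne_zero hn 1)).2 (by simp)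

lemma X_pow_add_one_ne_zero (n : ℕ) : (X ^ n + 1 : ℝ[X]) ≠ 0 := by
  intro h
  have := congrArg (eval 1) h
  norm_num at this


lemma natCast_natFloor_ratCast (q : ℚ) (hq : 0 ≤ q) : ((⌊(q : ℝ)⌋₊ : ℕ) : ℚ) = ⌊q⌋ := by
  rw [← Int.cast_natCast, Int.natCast_floor_eq_floor (by exact_mod_cast hq), Rat.floor_cast]

lemma piFn_X_pow_mul_X_pow_sub_one (κ d s n : ℕ) (hn : 0 < n) :
    piFn κ d (X ^ s * (X ^ n - 1)) = (2 * s + n) * κ / d + ⌊(κ * n / d : ℚ)⌋ + 1 / 2 := by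
  have hg : (X ^ n - 1 : ℝ[X]) ≠ 0 := by simpa using X_pow_sub_C_ne_zero hn (1 : ℝ)
  have hfloor : (κ : ℝ) / d * n = ((κ * n / d : ℚ) : ℝ) := by push_cast; ring
  rw [piFn, rootMultiplicity_zero_X_pow_mul s (by simp [hn.ne']),
    rootMultiplicity_X_pow_mul_of_ne_zero s hg one_ne_zero, rootMultiplicity_one_X_pow_sub_one n hn,
    argCount_X_pow_mul _ s hg, argCount_X_pow_sub_one _ n hn, hfloor,
    natCast_natFloor_ratCast _ (by positivity), natDegree_mul (pow_ne_zero s X_ne_zero) hg,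
    natDegree_X_pow, ← C_1, natDegree_X_pow_sub_C]
  push_cast
  ring

lemma piFn_X_pow_mul_X_pow_add_one (κ d s n : ℕ) (hn : 0 < n) :
    piFn κ d (X ^ s * (X ^ n + 1)) = (2 * s + n) * κ / d + ⌊(κ * n / d + 1 / 2 : ℚ)⌋ := by
  have hg := X_pow_add_one_ne_zero n
  have hfloor : (κ : ℝ) / d * n + 1 / 2 = ((κ * n / d + 1 / 2 : ℚ) : ℝ) := by push_cast; ring
  rw [piFn, rootMultiplicity_zero_X_pow_mul s (by simp [hn.ne']),
    rootMultiplicity_X_pow_mul_of_ne_zero s hg one_ne_zero,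
    rootMultiplicity_eq_zero (by norm_num : ¬ (X ^ n + 1 : ℝ[X]).IsRoot 1),
    argCount_X_pow_mul _ s hg, argCount_X_pow_add_one _ n hn, hfloor,
    natCast_natFloor_ratCast _ (by positivity), natDegree_mul (pow_ne_zero s X_ne_zero) hg,
    natDegree_X_pow, ← C_1, natDegree_X_pow_add_C]
  push_cast
  ring

lemma piFn_neg (κ d : ℕ) (f : ℝ[X]) : piFn κ d (-f) = piFn κ d f := by
  have hneg : -f = C (-1) * f := by simp
  have hC : C (-1 : ℝ) ≠ 0 := by simp
  by_cases hf : f = 0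
  · rw [hf, neg_zero]
  have hrm (x : ℝ) : rootMultiplicity x (-f) = rootMultiplicity x f := by
    rw [hneg, rootMultiplicity_mul (mul_ne_zero hC hf), rootMultiplicity_C, zero_add]
  have hac : argCount ((κ : ℝ) / d) (-f) = argCount ((κ : ℝ) / d) f := by
    rw [argCount, argCount, hneg, Polynomial.map_mul, map_C, roots_C_mul _ (by simp)]
  rw [piFn, piFn, hrm 0, hrm 1, hac, natDegree_neg]

lemma piFn_X_pow_mul_sub_one_sub_piFn_X_pow_mul_add_one {κ d d' : ℕ} (hd : 2 * d' = d)
    (hd' : 0 < d') {s₁ n₁ s₂ n₂ : ℕ} (hn₁ : 0 < n₁) (hn₂ : 0 < n₂)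
    (h : 2 * s₁ + n₁ = 2 * s₂ + n₂ + d') :
    piFn κ d (X ^ s₁ * (X ^ n₁ - 1)) - piFn κ d (X ^ s₂ * (X ^ n₂ + 1)) =
      (κ + 1) / 2 + ⌊(κ * n₁ / d : ℚ)⌋ - ⌊(κ * n₂ / d + 1 / 2 : ℚ)⌋ := by
  rw [piFn_X_pow_mul_X_pow_sub_one κ d s₁ n₁ hn₁, piFn_X_pow_mul_X_pow_add_one κ d s₂ n₂ hn₂]
  have hdq : (d : ℚ) = 2 * d' := by exact_mod_cast hd.symm
  have hq : (2 * s₁ + n₁ : ℚ) = 2 * s₂ + n₂ + d' := by exact_mod_cast h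
  have : (d' : ℚ) ≠ 0 := by positivity
  rw [hdq]
  field_simp
  linear_combination (κ : ℚ) * hq

lemma floor_intCast_add_div {b : ℤ} {d : ℕ} (hb0 : 0 ≤ b) (hbd : b < d) (z : ℤ) :
    ⌊(z + b / d : ℚ)⌋ = z := by
  rw [Int.floor_intCast_add, add_eq_left, Int.floor_eq_zero_iff]
  have : (0 : ℚ) < d := by exact_mod_cast hb0.trans_lt hbd
  exact ⟨by positivity, (div_lt_one this).2 (by exact_mod_cast hbd)⟩

lemma floor_one_sub_div {b : ℤ} {d : ℕ} (hb0 : 0 ≤ b) (hbd : b < d) :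
    ⌊(1 - b / d : ℚ)⌋ = if b = 0 then 1 else 0 := by
  split_ifs with hb
  · simp [hb]
  · have hd : (0 : ℚ) < d := by exact_mod_cast hb0.trans_lt hbd
    rw [Int.floor_eq_zero_iff]
    constructor
    · rw [sub_nonneg, div_le_one hd]
      exact_mod_cast hbd.le
    · have : (0 : ℚ) < b / d := div_pos (by exact_mod_cast lt_of_le_of_ne hb0 (Ne.symm hb)) hd
      linarith

lemma floor_mul_div_add_half {κ d d' : ℕ} {a b : ℤ} (hd : 2 * d' = d) (hb0 : 0 ≤ b) (hbd : b < d) {p : ℕ}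
    (hab : (κ : ℚ) * p = a * d + b - d') : ⌊(κ * p / d + 1 / 2 : ℚ)⌋ = a := by
  subst hd
  have : (d' : ℚ) ≠ 0 := by exact_mod_cast (by omega : d' ≠ 0)
  rw [← floor_intCast_add_div hb0 hbd a]
  congr 1
  push_cast at hab ⊢
  field_simp
  linear_combination hab

section cohook

variable {κ d d' : ℕ} {i j : ℕ}

lemma piFn_cohook_sub_of_lt (hκ : Odd κ) (hd : 2 * d' = d) (hd' : 0 < d') (hji : j < i) :
    piFn κ d (X ^ (i + d') - X ^ j) - piFn κ d (X ^ i + X ^ j) = κ := by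
  obtain ⟨p, rfl⟩ : ∃ p, i = j + p := ⟨i - j, by omega⟩
  obtain ⟨e, rfl⟩ := hκ
  subst hd
  have : (d' : ℚ) ≠ 0 := by positivity
  have hfloor : ((2 * e + 1 : ℕ) * (p + d' : ℕ) / (2 * d' : ℕ) : ℚ) =
      (2 * e + 1 : ℕ) * p / (2 * d' : ℕ) + 1 / 2 + ((e : ℤ) : ℚ) := by
    push_cast
    field_simp
    ring
  rw [show (X : ℝ[X]) ^ (j + p + d') - X ^ j = X ^ j * (X ^ (p + d') - 1) by ring,
    show (X : ℝ[X]) ^ (j + p) + X ^ j = X ^ j * (X ^ p + 1) by ring,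
    piFn_X_pow_mul_sub_one_sub_piFn_X_pow_mul_add_one rfl hd' (by omega) (by omega) (by omega),
    hfloor, Int.floor_add_intCast]
  push_cast
  ring

lemma piFn_cohook_sub_of_lt_of_lt (hκ : Odd κ) (hd : 2 * d' = d) (hij : i < j) (hji : j < i + d')
    {a b : ℤ} (hab : (κ : ℤ) * ((j : ℤ) - i) = a * d + b - d') (hb0 : 0 ≤ b) (hbd : b < d) :
    piFn κ d (X ^ (i + d') - X ^ j) - piFn κ d (X ^ i + X ^ j) =
      if b = 0 then (κ : ℚ) - 2 * a + 1 else (κ : ℚ) - 2 * a := by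
  obtain ⟨p, rfl⟩ : ∃ p, j = i + p := ⟨j - i, by omega⟩
  obtain ⟨n, rfl⟩ : ∃ n, d' = p + n := ⟨d' - p, by omega⟩
  have habq : (κ : ℚ) * p = a * d + b - (p + n : ℕ) := by
    rw [Nat.cast_add i p, add_sub_cancel_left] at hab
    exact_mod_cast hab
  obtain ⟨e, rfl⟩ := hκ
  subst hd
  have : (p + n : ℚ) ≠ 0 := by exact_mod_cast (by omega : p + n ≠ 0)
  have hfloor : ((2 * e + 1 : ℕ) * n / (2 * (p + n) : ℕ) : ℚ) =
      ((e - a : ℤ) : ℚ) + (1 - b / (2 * (p + n) : ℕ)) := by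
    push_cast at habq ⊢
    field_simp
    linear_combination -habq
  rw [show (X : ℝ[X]) ^ (i + (p + n)) - X ^ (i + p) = X ^ (i + p) * (X ^ n - 1) by ring,
    show (X : ℝ[X]) ^ i + X ^ (i + p) = X ^ i * (X ^ p + 1) by ring,
    piFn_X_pow_mul_sub_one_sub_piFn_X_pow_mul_add_one rfl (by omega) (by omega) (by omega)
      (by omega), hfloor, Int.floor_intCast_add, floor_one_sub_div hb0 hbd,
    floor_mul_div_add_half rfl hb0 hbd habq]
  split_ifs <;> push_cast <;> ring

lemma piFn_cohook_sub_of_add_lt (hκ : Odd κ) (hd : 2 * d' = d) (hd' : 0 < d')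
    (hij : i + d' < j) {a b : ℤ} (hab : (κ : ℤ) * ((j : ℤ) - i) = a * d + b - d') (hb0 : 0 ≤ b)
    (hbd : b < d) :
    piFn κ d (X ^ (i + d') - X ^ j) - piFn κ d (X ^ i + X ^ j) = 0 := by
  obtain ⟨n, rfl⟩ : ∃ n, j = i + d' + n := ⟨j - (i + d'), by omega⟩
  have habq : (κ : ℚ) * (d' + n : ℕ) = a * d + b - d' := by
    rw [add_assoc, Nat.cast_add i, add_sub_cancel_left] at hab
    exact_mod_cast hab
  obtain ⟨e, rfl⟩ := hκ
  subst hd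
  have : (d' : ℚ) ≠ 0 := by positivity
  have hfloor : ((2 * e + 1 : ℕ) * n / (2 * d' : ℕ) : ℚ) =
      ((a - e - 1 : ℤ) : ℚ) + b / (2 * d' : ℕ) := by
    push_cast at habq ⊢
    field_simp
    linear_combination habq
  rw [show (X : ℝ[X]) ^ (i + d') - X ^ (i + d' + n) = -(X ^ (i + d') * (X ^ n - 1)) by ring,
    show (X : ℝ[X]) ^ i + X ^ (i + d' + n) = X ^ i * (X ^ (d' + n) + 1) by ring, piFn_neg,
    piFn_X_pow_mul_sub_one_sub_piFn_X_pow_mul_add_one rfl hd' (by omega) (by omega) (by omega),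
    hfloor, floor_intCast_add_div hb0 hbd, floor_mul_div_add_half rfl hb0 hbd habq]
  push_cast
  ring

end cohook

theorem piFn_cohook_sub_general (κ d : ℕ) (hd : 2 ≤ d)
    (hcop : Nat.Coprime κ d) (d' : ℕ) (hd' : 2 * d' = d) (i j : ℕ) (a b : ℤ)
    (hab : (κ : ℤ) * ((j : ℤ) - (i : ℤ)) = a * (d : ℤ) + b - (d' : ℤ))
    (hb0 : 0 ≤ b) (hbd : b < (d : ℤ)) :
    (0 < (i : ℤ) - (j : ℤ) →
      piFn κ d (X ^ (i + d') - X ^ j) - piFn κ d (X ^ i + X ^ j) = (κ : ℚ)) ∧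
    (0 < (j : ℤ) - (i : ℤ) → (j : ℤ) - (i : ℤ) < (d' : ℤ) →
      piFn κ d (X ^ (i + d') - X ^ j) - piFn κ d (X ^ i + X ^ j) =
        if b = 0 then (κ : ℚ) - 2 * (a : ℚ) + 1 else (κ : ℚ) - 2 * (a : ℚ)) ∧
    ((d' : ℤ) < (j : ℤ) - (i : ℤ) →
      piFn κ d (X ^ (i + d') - X ^ j) - piFn κ d (X ^ i + X ^ j) = 0) := by
  have hκ : Odd κ := (Nat.Coprime.coprime_dvd_right ⟨d', hd'.symm⟩ hcop).odd_of_right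
  have hd'0 : 0 < d' := by omega
  exact ⟨fun _ => piFn_cohook_sub_of_lt hκ hd' hd'0 (by omega),
    fun _ _ => piFn_cohook_sub_of_lt_of_lt hκ hd' (by omega) (by omega) hab hb0 hbd,
    fun _ => piFn_cohook_sub_of_add_lt hκ hd' hd'0 (by omega) hab hb0 hbd⟩

/-- Proposition 8.6, first equation: `d` even, `d' = d/2`, and `κ(j−i) = ad + b − d/2` with
`0 ≤ b < d`.  The difference `π_{κ/d}(q^{i+d'} − q^j) − π_{κ/d}(q^i + q^j)` equals `κ` if
`i − j > 0`, equals `κ − 2a + δ_{b,0}` if `0 < j − i < d'`, and equals `0` if `j − i > d'`. -/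
theorem piFn_cohook_sub (κ d : ℕ) (hd : 2 ≤ d) (heven : Even d) (hκ : 1 ≤ κ)
    (hcop : Nat.Coprime κ d) (d' : ℕ) (hd' : 2 * d' = d) (i j : ℕ) (a b : ℤ)
    (hab : (κ : ℤ) * ((j : ℤ) - (i : ℤ)) = a * (d : ℤ) + b - (d' : ℤ))
    (hb0 : 0 ≤ b) (hbd : b < (d : ℤ)) :
    (0 < (i : ℤ) - (j : ℤ) →
      piFn κ d (X ^ (i + d') - X ^ j) - piFn κ d (X ^ i + X ^ j) = (κ : ℚ)) ∧
    (0 < (j : ℤ) - (i : ℤ) → (j : ℤ) - (i : ℤ) < (d' : ℤ) →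
      piFn κ d (X ^ (i + d') - X ^ j) - piFn κ d (X ^ i + X ^ j) =
        if b = 0 then (κ : ℚ) - 2 * (a : ℚ) + 1 else (κ : ℚ) - 2 * (a : ℚ)) ∧
    ((d' : ℤ) < (j : ℤ) - (i : ℤ) →
      piFn κ d (X ^ (i + d') - X ^ j) - piFn κ d (X ^ i + X ^ j) = 0) :=
  piFn_cohook_sub_general κ d hd hcop d' hd' i j a b hab hb0 hbd
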